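/- Let F and G be free filters on ω with F ≤_K G (F Katětov below G). Then: (1) if N_G has the Josefson–Nissenzweig property, then N_F has the Josefson–Nissenzweig property; (2) if N_G has the bounded Josefson–Nissenzweig property, then N_F has the bounded Josefson–Nissenzweig property. -/

import Mathlib

open Filter Topology

noncomputable section

/-- The topology of the space `N_F = ω ∪ {p_F}` on `Option α`, where `none` plays the
role of the point `p_F`: every `some a` is isolated, and neighborhoods of `none`
are the sets `A ∪ {p_F}` with `A ∈ F`. -/
def NFtop {α : Type*} (F : Filter α) : TopologicalSpace (Option α) where
  IsOpen U := none ∈ U → {a : α | some a ∈ U} ∈ F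
  isOpen_univ := fun _ => Filter.univ_mem
  isOpen_inter := fun U V hU hV h => F.inter_sets (hU h.1) (hV h.2)
  isOpen_sUnion := fun S hS h => by
    obtain ⟨U, hU, hnU⟩ := h
    exact Filter.mem_of_superset (hS U hU hnU) fun a ha => ⟨U, hU, ha⟩

/-- The norm `‖μ‖ = Σ |α_i|` of a finitely supported signed measure. -/
def mnorm {X : Type*} (μ : X →₀ ℝ) : ℝ := ∑ x ∈ μ.support, |μ x|

/-- The integral `μ(f) = Σ α_i f(x_i)`. -/
def mIntg {X : Type*} (μ : X →₀ ℝ) (f : X → ℝ) : ℝ := ∑ x ∈ μ.support, μ x * f x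

/-- The norm of the restriction `μ ↾ A`. -/
def mnormOn {X : Type*} (μ : X →₀ ℝ) (A : Set X) : ℝ :=
  ∑ x ∈ μ.support, Set.indicator A (fun y => |μ y|) x

/-- The value `μ(A)` of a finitely supported signed measure on a set. -/
def msetOf {X : Type*} (μ : X →₀ ℝ) (A : Set X) : ℝ :=
  ∑ x ∈ μ.support, Set.indicator A (fun y => μ y) x

/-- A JN-sequence on `X` (with topology `t`). -/
def IsJNSeq {X : Type*} (t : TopologicalSpace X) (μ : ℕ → (X →₀ ℝ)) : Prop :=
  (∀ n, mnorm (μ n) = 1) ∧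
  ∀ f : X → ℝ, @Continuous X ℝ t _ f →
    Tendsto (fun n => mIntg (μ n) f) atTop (nhds 0)

/-- A BJN-sequence on `X` (with topology `t`). -/
def IsBJNSeq {X : Type*} (t : TopologicalSpace X) (μ : ℕ → (X →₀ ℝ)) : Prop :=
  (∀ n, mnorm (μ n) = 1) ∧
  ∀ f : X → ℝ, @Continuous X ℝ t _ f → (∃ C : ℝ, ∀ x, |f x| ≤ C) →
    Tendsto (fun n => mIntg (μ n) f) atTop (nhds 0)

/-- The Josefson–Nissenzweig property. -/
def JNP {X : Type*} (t : TopologicalSpace X) : Prop := ∃ μ, IsJNSeq t μ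

/-- The bounded Josefson–Nissenzweig property. -/
def BJNP {X : Type*} (t : TopologicalSpace X) : Prop := ∃ μ, IsBJNSeq t μ

/-- A free filter: a proper filter containing all cofinite sets. -/
def IsFreeFilter {α : Type*} (F : Filter α) : Prop := F.NeBot ∧ F ≤ Filter.cofinite

/-- Katětov preorder: `F ≤_K G`. -/
def KatetovLE (F G : Filter ℕ) : Prop := ∃ f : ℕ → ℕ, ∀ A ∈ F, f ⁻¹' A ∈ G

section Final2
open Filter Topology
open scoped Classical
section Aux
open Finset

variable {X : Type*}

/-- total mass -/
def mtot (μ : X →₀ ℝ) : ℝ := ∑ x ∈ μ.support, μ x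

lemma mIntg_eq_sum {μ : X →₀ ℝ} {s : Finset X} (hs : μ.support ⊆ s) (h : X → ℝ) :
    mIntg μ h = ∑ x ∈ s, μ x * h x := by
  refine Finset.sum_subset hs fun x _ hx => ?_
  rw [Finsupp.notMem_support_iff.mp hx, zero_mul]

lemma mnorm_eq_sum {μ : X →₀ ℝ} {s : Finset X} (hs : μ.support ⊆ s) :
    mnorm μ = ∑ x ∈ s, |μ x| := by
  refine Finset.sum_subset hs fun x _ hx => ?_
  rw [Finsupp.notMem_support_iff.mp hx, abs_zero]

lemma mtot_eq_sum {μ : X →₀ ℝ} {s : Finset X} (hs : μ.support ⊆ s) :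
    mtot μ = ∑ x ∈ s, μ x := by
  refine Finset.sum_subset hs fun x _ hx => ?_
  exact Finsupp.notMem_support_iff.mp hx

lemma mnorm_nonneg (μ : X →₀ ℝ) : 0 ≤ mnorm μ :=
  Finset.sum_nonneg fun _ _ => abs_nonneg _

lemma abs_mtot_le (μ : X →₀ ℝ) : |mtot μ| ≤ mnorm μ :=
  (Finset.abs_sum_le_sum_abs _ _)

lemma mIntg_one (μ : X →₀ ℝ) : mIntg μ (fun _ => (1:ℝ)) = mtot μ := by
  unfold mIntg mtot; simp

lemma mIntg_smul (c : ℝ) (μ : X →₀ ℝ) (h : X → ℝ) :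
    mIntg (c • μ) h = c * mIntg μ h := by
  rw [mIntg_eq_sum (s := μ.support) (Finsupp.support_smul), mIntg, Finset.mul_sum]
  refine Finset.sum_congr rfl fun x _ => ?_
  simp [mul_assoc]

lemma mnorm_smul (c : ℝ) (μ : X →₀ ℝ) :
    mnorm (c • μ) = |c| * mnorm μ := by
  rw [mnorm_eq_sum (s := μ.support) (Finsupp.support_smul), mnorm, Finset.mul_sum]
  refine Finset.sum_congr rfl fun x _ => ?_
  simp [abs_mul]

lemma mIntg_sub [DecidableEq X] (μ ν : X →₀ ℝ) (h : X → ℝ) :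
    mIntg (μ - ν) h = mIntg μ h - mIntg ν h := by
  rw [mIntg_eq_sum (s := μ.support ∪ ν.support) (Finsupp.support_sub),
    mIntg_eq_sum (s := μ.support ∪ ν.support) Finset.subset_union_left,
    mIntg_eq_sum (s := μ.support ∪ ν.support) Finset.subset_union_right,
    ← Finset.sum_sub_distrib]
  refine Finset.sum_congr rfl fun x _ => ?_
  simp [sub_mul]

lemma mIntg_single_pt (μ : X →₀ ℝ) (a : X) (C : ℝ) [DecidableEq X] :
    mIntg μ (fun b => if b = a then C else 0) = μ a * C := by
  unfold mIntg
  rw [Finset.sum_congr rfl (fun x _ => by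
    show μ x * (if x = a then C else 0) = if x = a then μ a * C else 0
    split <;> simp_all)]
  rw [Finset.sum_ite_eq' μ.support a (fun _ => μ a * C)]
  split_ifs with h
  · rfl
  · rw [Finsupp.notMem_support_iff.mp h, zero_mul]

lemma mnorm_eq_mtot_of_nonneg {μ : X →₀ ℝ} (hμ : ∀ a, 0 ≤ μ a) :
    mnorm μ = mtot μ :=
  Finset.sum_congr rfl fun x _ => abs_of_nonneg (hμ x)

lemma mIntg_mapDomain {Y : Type*} (u : X → Y) (μ : X →₀ ℝ) (h : Y → ℝ) :
    mIntg (Finsupp.mapDomain u μ) h = mIntg μ (fun x => h (u x)) := by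
  show (Finsupp.mapDomain u μ).sum (fun y b => b * h y) = μ.sum (fun x b => b * h (u x))
  exact Finsupp.sum_mapDomain_index (by simp) (by intro a b₁ b₂; ring)

lemma mtot_mapDomain {Y : Type*} (u : X → Y) (μ : X →₀ ℝ) :
    mtot (Finsupp.mapDomain u μ) = mtot μ := by
  have h1 := mIntg_mapDomain u μ (fun _ => (1:ℝ))
  rwa [mIntg_one, mIntg_one] at h1

lemma mapDomain_nonneg {Y : Type*} (u : X → Y) {μ : X →₀ ℝ} (hμ : ∀ a, 0 ≤ μ a)
    (y : Y) : 0 ≤ Finsupp.mapDomain u μ y := by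
  classical
  rw [Finsupp.mapDomain, Finsupp.sum_apply]
  refine Finset.sum_nonneg fun x _ => ?_
  show 0 ≤ Finsupp.single (u x) (μ x) y
  rw [Finsupp.single_apply]
  split
  · exact hμ x
  · exact le_refl 0

end Aux

lemma mtot_smul {X : Type*} (c : ℝ) (μ : X →₀ ℝ) : mtot (c • μ) = c * mtot μ := by
  rw [mtot_eq_sum (s := μ.support) (Finsupp.support_smul), mtot, Finset.mul_sum]
  refine Finset.sum_congr rfl fun x _ => ?_
  simp
section Aux2
open Filter Topology

-- Tendsto utilities
lemma tendsto_of_abs_le {X : ℕ → ℝ}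
    (h : ∀ ε > 0, ∀ᶠ n in atTop, |X n| ≤ ε) : Tendsto X atTop (nhds 0) := by
  rw [Metric.tendsto_atTop]
  intro ε hε
  obtain ⟨N, hN⟩ := (h (ε/2) (by linarith)).exists_forall_of_atTop
  exact ⟨N, fun n hn => by
    rw [Real.dist_eq, sub_zero]
    exact lt_of_le_of_lt (hN n hn) (by linarith)⟩

lemma exists_freq_of_not_tendsto {X : ℕ → ℝ} (hpos : ∀ n, 0 ≤ X n)
    (h : ¬ Tendsto X atTop (nhds 0)) :
    ∃ δ > 0, ∀ N, ∃ n ≥ N, δ ≤ X n := by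
  rw [Metric.tendsto_atTop] at h
  push_neg at h
  obtain ⟨ε, hε, hfreq⟩ := h
  refine ⟨ε, hε, fun N => ?_⟩
  obtain ⟨n, hn, hd⟩ := hfreq N
  refine ⟨n, hn, ?_⟩
  rw [Real.dist_eq, sub_zero, abs_of_nonneg (hpos n)] at hd
  exact hd

-- continuity criterion for NFtop
lemma nftop_continuous_of_ideal_support {F : Filter ℕ} {D : Set ℕ}
    (hD : Dᶜ ∈ F) {g : Option ℕ → ℝ} (hg0 : g none = 0)
    (hsupp : ∀ a, g a ≠ 0 → a ∈ Option.some '' D) :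
    @Continuous (Option ℕ) ℝ (NFtop F) _ g := by
  rw [continuous_def]
  intro U hU
  show none ∈ g ⁻¹' U → _
  intro hnone
  have h0U : (0:ℝ) ∈ U := by rwa [← hg0]
  obtain ⟨ε, hε, hball⟩ := Metric.isOpen_iff.mp hU 0 h0U
  refine Filter.mem_of_superset hD fun x hx => ?_
  show g (some x) ∈ U
  by_cases hz : g (some x) = 0
  · rwa [hz]
  · obtain ⟨y, hy, hxy⟩ := hsupp _ hz
    rw [Option.some_inj] at hxy
    subst hxy
    exact absurd hy hx

-- decomposition at none
lemma mnorm_erase_none (μ : Option ℕ →₀ ℝ) :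
    mnorm μ = |μ none| + mnorm (μ.erase none) := by
  classical
  have hsub : (μ.erase none).support ⊆ μ.support.erase none := by
    rw [Finsupp.support_erase]
  rw [mnorm_eq_sum hsub]
  have hvals : ∀ x ∈ μ.support.erase none, |(μ.erase none) x| = |μ x| := by
    intro x hx
    rw [Finsupp.erase_ne (Finset.ne_of_mem_erase hx)]
  rw [Finset.sum_congr rfl hvals]
  by_cases hn : none ∈ μ.support
  · rw [mnorm, ← Finset.add_sum_erase _ _ hn]
  · rw [Finset.erase_eq_of_notMem hn, Finsupp.notMem_support_iff.mp hn, abs_zero, zero_add]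
    rfl

lemma mtot_erase_none (μ : Option ℕ →₀ ℝ) :
    mtot μ = μ none + mtot (μ.erase none) := by
  classical
  have hsub : (μ.erase none).support ⊆ μ.support.erase none := by
    rw [Finsupp.support_erase]
  rw [mtot_eq_sum hsub]
  have hvals : ∀ x ∈ μ.support.erase none, (μ.erase none) x = μ x := by
    intro x hx
    rw [Finsupp.erase_ne (Finset.ne_of_mem_erase hx)]
  rw [Finset.sum_congr rfl hvals]
  by_cases hn : none ∈ μ.support
  · rw [mtot, ← Finset.add_sum_erase _ _ hn]
  · rw [Finset.erase_eq_of_notMem hn, Finsupp.notMem_support_iff.mp hn, zero_add]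
    rfl

lemma mapDomain_optionMap_none (f : ℕ → ℕ) (ν : Option ℕ →₀ ℝ) (hν : ν none = 0) :
    Finsupp.mapDomain (Option.map f) ν none = 0 := by
  classical
  rw [Finsupp.mapDomain, Finsupp.sum_apply]
  refine Finset.sum_eq_zero fun x hx => ?_
  show Finsupp.single (Option.map f x) (ν x) none = 0
  rw [Finsupp.single_apply]
  split_ifs with h
  · exfalso
    cases x with
    | none => exact Finsupp.notMem_support_iff.mpr hν hx |>.elim
    | some y => simp at h
  · rfl

end Aux2
section LemAB
open Filter Topology
open scoped Classical

lemma lemAB (μ : ℕ → (Option ℕ →₀ ℝ)) (D : Set ℕ) (w : Option ℕ → ℝ)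
    (H : ∀ g : Option ℕ → ℝ, g none = 0 → (∀ a, g a ≠ 0 → a ∈ Option.some '' D) →
      (∀ a, |g a| ≤ |w a|) → Tendsto (fun n => mIntg (μ n) g) atTop (nhds 0)) :
    Tendsto (fun n => ∑ a ∈ (μ n).support,
      if a ∈ Option.some '' D then |μ n a| * |w a| else 0) atTop (nhds 0) := by
  set sD : Set (Option ℕ) := Option.some '' D with hsD
  set V : ℕ → ℝ := fun n => ∑ a ∈ (μ n).support,
      if a ∈ sD then |μ n a| * |w a| else 0 with hV
  show Tendsto V atTop (nhds 0)
  by_contra hcon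
  have hVpos : ∀ n, 0 ≤ V n := by
    intro n
    refine Finset.sum_nonneg fun a _ => ?_
    split_ifs
    · positivity
    · exact le_refl (0:ℝ)
  obtain ⟨δ, hδ, hfreq⟩ := exists_freq_of_not_tendsto hVpos hcon
  have hnone_nmem : (none : Option ℕ) ∉ sD := by
    rintro ⟨y, -, hy⟩
    cases hy
  -- pointwise convergence
  have hpt : ∀ a ∈ sD, Tendsto (fun n => |μ n a| * |w a|) atTop (nhds 0) := by
    intro a ha
    have hne : (none : Option ℕ) ≠ a := fun h => hnone_nmem (h ▸ ha)
    have hg := H (fun b => if b = a then w a else 0)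
      (by show (if (none : Option ℕ) = a then w a else 0) = 0
          exact if_neg hne)
      (by intro b hb
          by_cases hba : b = a
          · rwa [hba]
          · exact absurd (if_neg hba) hb)
      (by intro b
          by_cases hba : b = a
          · subst hba; simp
          · show |if b = a then w a else 0| ≤ |w b|
            rw [if_neg hba, abs_zero]
            exact abs_nonneg _)
    have h2 : (fun n => mIntg (μ n) (fun b => if b = a then w a else 0))
        = fun n => μ n a * w a := by
      funext n; exact mIntg_single_pt (μ n) a (w a)
    rw [h2] at hg
    have h3 := hg.abs
    rw [abs_zero] at h3
    refine h3.congr fun n => ?_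
    rw [abs_mul]
  have hptS : ∀ S : Finset (Option ℕ),
      Tendsto (fun n => ∑ a ∈ S, if a ∈ sD then |μ n a| * |w a| else 0) atTop (nhds 0) := by
    intro S
    have h4 : Tendsto (fun n => ∑ a ∈ S, if a ∈ sD then |μ n a| * |w a| else 0) atTop
        (nhds (∑ a ∈ S, (0:ℝ))) := by
      refine tendsto_finset_sum _ fun a _ => ?_
      by_cases ha : a ∈ sD
      · simpa [if_pos ha] using hpt a ha
      · simpa [if_neg ha] using (tendsto_const_nhds : Tendsto (fun _ : ℕ => (0:ℝ)) atTop _)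
    simpa using h4
  -- the choice step
  have step : ∀ (N : ℕ) (S : Finset (Option ℕ)), ∃ m, N ≤ m ∧ δ ≤ V m ∧
      (∑ a ∈ S, if a ∈ sD then |μ m a| * |w a| else 0) < δ/4 := by
    intro N S
    have hev := (hptS S).eventually_lt_const (show (0:ℝ) < δ/4 by linarith)
    obtain ⟨N', hN'⟩ := hev.exists_forall_of_atTop
    obtain ⟨m, hm, hVm⟩ := hfreq (max N N')
    exact ⟨m, le_trans (le_max_left _ _) hm, hVm, hN' m (le_trans (le_max_right _ _) hm)⟩
  -- recursive construction
  let FS : ℕ → ℕ × Finset (Option ℕ) := fun k =>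
    Nat.rec (motive := fun _ => ℕ × Finset (Option ℕ))
      ⟨(step 0 ∅).choose, (μ ((step 0 ∅).choose)).support⟩
      (fun _ p => ⟨(step (p.1+1) p.2).choose,
        p.2 ∪ (μ ((step (p.1+1) p.2).choose)).support⟩) k
  let nseq : ℕ → ℕ := fun k => (FS k).1
  let SB : ℕ → Finset (Option ℕ) :=
    fun k => (Finset.range k).biUnion (fun j => (μ (nseq j)).support)
  have hnseq0 : nseq 0 = (step 0 ∅).choose := rfl
  have hnseqS : ∀ k, nseq (k+1) = (step ((FS k).1+1) (FS k).2).choose := fun _ => rfl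
  have hFS2S : ∀ k, (FS (k+1)).2 = (FS k).2 ∪ (μ (nseq (k+1))).support := fun _ => rfl
  have hFS2 : ∀ k, (FS k).2 = SB (k+1) := by
    intro k
    induction k with
    | zero =>
      show (μ (nseq 0)).support = SB 1
      show (μ (nseq 0)).support = (Finset.range 1).biUnion (fun j => (μ (nseq j)).support)
      rw [Finset.range_one, Finset.singleton_biUnion]
    | succ k ih =>
      rw [hFS2S k, ih]
      show SB (k+1) ∪ (μ (nseq (k+1))).support
          = (Finset.range (k+2)).biUnion (fun j => (μ (nseq j)).support)
      rw [Finset.range_add_one, Finset.biUnion_insert]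
      exact Finset.union_comm _ _
  have f1 : ∀ k, nseq k < nseq (k+1) := by
    intro k
    have h5 := (step ((FS k).1+1) (FS k).2).choose_spec.1
    rw [← hnseqS k] at h5
    exact lt_of_lt_of_le (Nat.lt_succ_self _) h5
  have f2 : ∀ k, δ ≤ V (nseq k) := by
    intro k
    cases k with
    | zero => rw [hnseq0]; exact (step 0 ∅).choose_spec.2.1
    | succ k => rw [hnseqS k]; exact (step ((FS k).1+1) (FS k).2).choose_spec.2.1
  have f3 : ∀ k, (∑ a ∈ SB k, if a ∈ sD then |μ (nseq k) a| * |w a| else 0) < δ/4 := by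
    intro k
    cases k with
    | zero =>
      have h6 : SB 0 = ∅ := by
        show (Finset.range 0).biUnion (fun j => (μ (nseq j)).support) = ∅
        rw [Finset.range_zero, Finset.biUnion_empty]
      rw [h6, Finset.sum_empty]
      linarith
    | succ k =>
      have hspec := (step ((FS k).1+1) (FS k).2).choose_spec.2.2
      rw [← hnseqS k, hFS2 k] at hspec
      exact hspec
  have hmono : StrictMono nseq := strictMono_nat_of_lt_succ f1
  -- the test function
  let newp : ℕ → Option ℕ → Prop :=
    fun k a => a ∈ (μ (nseq k)).support ∧ a ∈ sD ∧ a ∉ SB k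
  have uniq : ∀ {k j : ℕ} {a : Option ℕ}, newp k a → newp j a → k = j := by
    intro k j a hk hj
    by_contra hne
    rcases lt_or_gt_of_ne hne with hlt | hlt
    · exact hj.2.2 (Finset.mem_biUnion.mpr ⟨k, Finset.mem_range.mpr hlt, hk.1⟩)
    · exact hk.2.2 (Finset.mem_biUnion.mpr ⟨j, Finset.mem_range.mpr hlt, hj.1⟩)
  let g : Option ℕ → ℝ := fun a =>
    if h : ∃ k, newp k a then
      (if 0 ≤ μ (nseq (Nat.find h)) a then |w a| else -|w a|) else 0
  have hgpos : ∀ (a : Option ℕ) (h : ∃ k, newp k a),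
      g a = (if 0 ≤ μ (nseq (Nat.find h)) a then |w a| else -|w a|) := by
    intro a h
    exact dif_pos h
  have hgneg : ∀ (a : Option ℕ), (¬ ∃ k, newp k a) → g a = 0 := by
    intro a h
    exact dif_neg h
  have hg0 : g none = 0 := by
    refine hgneg none ?_
    rintro ⟨k, hk⟩
    exact hnone_nmem hk.2.1
  have hgsupp : ∀ a, g a ≠ 0 → a ∈ sD := by
    intro a hga
    by_cases h : ∃ k, newp k a
    · exact (Nat.find_spec h).2.1
    · exact absurd (hgneg a h) hga
  have hgbd : ∀ a, |g a| ≤ |w a| := by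
    intro a
    by_cases h : ∃ k, newp k a
    · rw [hgpos a h]
      split_ifs
      · rw [abs_abs]
      · rw [abs_neg, abs_abs]
    · rw [hgneg a h, abs_zero]
      exact abs_nonneg _
  -- key estimate
  have hkey : ∀ k, δ/2 ≤ mIntg (μ (nseq k)) g := by
    intro k
    have hterm : ∀ a ∈ (μ (nseq k)).support,
        (if a ∈ sD then |μ (nseq k) a| * |w a|
          - 2 * (if a ∈ SB k then |μ (nseq k) a| * |w a| else 0) else 0)
        ≤ μ (nseq k) a * g a := by
      intro a ha
      by_cases haD : a ∈ sD
      · by_cases haS : a ∈ SB k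
        · rw [if_pos haD, if_pos haS]
          have h1 : |μ (nseq k) a * g a| ≤ |μ (nseq k) a| * |w a| := by
            rw [abs_mul]
            exact mul_le_mul_of_nonneg_left (hgbd a) (abs_nonneg _)
          have h2 := neg_abs_le (μ (nseq k) a * g a)
          linarith
        · have hnp : newp k a := ⟨ha, haD, haS⟩
          have hex : ∃ j, newp j a := ⟨k, hnp⟩
          have hfind : Nat.find hex = k := uniq (Nat.find_spec hex) hnp
          rw [if_pos haD, if_neg haS]
          have hgaeq := hgpos a hex
          rw [hfind] at hgaeq
          rw [hgaeq]
          split_ifs with hs0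
          · rw [abs_of_nonneg hs0]
            linarith
          · rw [abs_of_neg (lt_of_not_ge hs0)]
            linarith [(by ring : (-(μ (nseq k) a)) * |w a| = μ (nseq k) a * -|w a|)]
      · rw [if_neg haD]
        have hga : g a = 0 := by
          by_contra hne
          exact haD (hgsupp a hne)
        rw [hga, mul_zero]
    have hsum1 : ∑ a ∈ (μ (nseq k)).support,
        (if a ∈ sD then |μ (nseq k) a| * |w a|
          - 2 * (if a ∈ SB k then |μ (nseq k) a| * |w a| else 0) else 0)
        ≤ mIntg (μ (nseq k)) g := Finset.sum_le_sum hterm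
    have hsplit : ∑ a ∈ (μ (nseq k)).support,
        (if a ∈ sD then |μ (nseq k) a| * |w a|
          - 2 * (if a ∈ SB k then |μ (nseq k) a| * |w a| else 0) else 0)
        = V (nseq k) - 2 * ∑ a ∈ (μ (nseq k)).support,
            (if a ∈ SB k then (if a ∈ sD then |μ (nseq k) a| * |w a| else 0) else 0) := by
      rw [hV]
      rw [Finset.mul_sum, ← Finset.sum_sub_distrib]
      refine Finset.sum_congr rfl fun a _ => ?_
      split_ifs <;> ring
    have hbound : ∑ a ∈ (μ (nseq k)).support,
        (if a ∈ SB k then (if a ∈ sD then |μ (nseq k) a| * |w a| else 0) else 0)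
        ≤ ∑ a ∈ SB k, (if a ∈ sD then |μ (nseq k) a| * |w a| else 0) := by
      rw [Finset.sum_ite_mem]
      refine Finset.sum_le_sum_of_subset_of_nonneg Finset.inter_subset_right ?_
      intro a _ _
      split_ifs
      · positivity
      · exact le_refl _
    have hf3 := f3 k
    have hf2 := f2 k
    have h7 : ∑ a ∈ (μ (nseq k)).support,
        (if a ∈ SB k then (if a ∈ sD then |μ (nseq k) a| * |w a| else 0) else 0) ≤ δ/4 :=
      le_trans hbound (le_of_lt hf3)
    calc δ/2 = δ - 2 * (δ/4) := by ring
    _ ≤ V (nseq k) - 2 * ∑ a ∈ (μ (nseq k)).support,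
        (if a ∈ SB k then (if a ∈ sD then |μ (nseq k) a| * |w a| else 0) else 0) := by
        linarith
    _ = ∑ a ∈ (μ (nseq k)).support,
        (if a ∈ sD then |μ (nseq k) a| * |w a|
          - 2 * (if a ∈ SB k then |μ (nseq k) a| * |w a| else 0) else 0) := hsplit.symm
    _ ≤ mIntg (μ (nseq k)) g := hsum1
  -- contradiction
  have hT : Tendsto (fun k => mIntg (μ (nseq k)) g) atTop (nhds 0) :=
    (H g hg0 hgsupp hgbd).comp hmono.tendsto_atTop
  have hev := hT.eventually_lt_const (show (0:ℝ) < δ/2 by linarith)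
  obtain ⟨k, hk⟩ := hev.exists
  exact absurd (hkey k) (not_le.mpr hk)

end LemAB
section QDef
open Filter Topology

/-- restriction to ω -/
def sigm (μ : Option ℕ →₀ ℝ) : Option ℕ →₀ ℝ := μ.erase none

/-- absolute value of a finitely supported measure -/
def fabs (ν : Option ℕ →₀ ℝ) : Option ℕ →₀ ℝ :=
  Finsupp.mapRange (fun x => |x|) abs_zero ν

/-- pushforward of |μ ↾ ω| along `Option.map f` -/
def pmeas (f : ℕ → ℕ) (μ : Option ℕ →₀ ℝ) : Option ℕ →₀ ℝ :=
  Finsupp.mapDomain (Option.map f) (fabs (sigm μ))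

/-- normalized pushforward -/
def Qmeas (f : ℕ → ℕ) (μ : ℕ → (Option ℕ →₀ ℝ)) (n : ℕ) : Option ℕ →₀ ℝ :=
  (mnorm (sigm (μ n)))⁻¹ • pmeas f (μ n)

lemma sigm_none (μ : Option ℕ →₀ ℝ) : sigm μ none = 0 := Finsupp.erase_same

lemma sigm_some (μ : Option ℕ →₀ ℝ) (x : ℕ) : sigm μ (some x) = μ (some x) :=
  Finsupp.erase_ne (by simp)

lemma sigm_support_subset (μ : Option ℕ →₀ ℝ) : (sigm μ).support ⊆ μ.support := by
  rw [sigm, Finsupp.support_erase]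
  exact Finset.erase_subset _ _

lemma fabs_apply (ν : Option ℕ →₀ ℝ) (a : Option ℕ) : fabs ν a = |ν a| :=
  Finsupp.mapRange_apply

lemma fabs_support (ν : Option ℕ →₀ ℝ) : (fabs ν).support = ν.support := by
  ext a
  rw [Finsupp.mem_support_iff, Finsupp.mem_support_iff, fabs_apply, abs_ne_zero]

lemma fabs_nonneg (ν : Option ℕ →₀ ℝ) (a : Option ℕ) : 0 ≤ fabs ν a := by
  rw [fabs_apply]; exact abs_nonneg _

lemma mtot_fabs (ν : Option ℕ →₀ ℝ) : mtot (fabs ν) = mnorm ν := by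
  rw [mtot_eq_sum (s := ν.support) (by rw [fabs_support])]
  exact Finset.sum_congr rfl fun a _ => fabs_apply ν a

lemma mnorm_fabs (ν : Option ℕ →₀ ℝ) : mnorm (fabs ν) = mnorm ν := by
  rw [mnorm_eq_sum (s := ν.support) (by rw [fabs_support])]
  refine Finset.sum_congr rfl fun a _ => ?_
  rw [fabs_apply, abs_abs]

lemma mnorm_sigm_le (μ : Option ℕ →₀ ℝ) : mnorm (sigm μ) ≤ mnorm μ := by
  have := mnorm_erase_none μ
  have h2 := abs_nonneg (μ none)
  rw [sigm]
  linarith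

lemma mtot_pmeas (f : ℕ → ℕ) (μ : Option ℕ →₀ ℝ) :
    mtot (pmeas f μ) = mnorm (sigm μ) := by
  rw [pmeas, mtot_mapDomain, mtot_fabs]

lemma pmeas_nonneg (f : ℕ → ℕ) (μ : Option ℕ →₀ ℝ) (a : Option ℕ) :
    0 ≤ pmeas f μ a :=
  mapDomain_nonneg _ (fabs_nonneg _) a

lemma pmeas_none (f : ℕ → ℕ) (μ : Option ℕ →₀ ℝ) : pmeas f μ none = 0 := by
  rw [pmeas]
  refine mapDomain_optionMap_none f _ ?_
  rw [fabs_apply, sigm_none, abs_zero]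

lemma mnorm_pmeas (f : ℕ → ℕ) (μ : Option ℕ →₀ ℝ) :
    mnorm (pmeas f μ) = mnorm (sigm μ) := by
  rw [← mtot_pmeas f μ]
  exact mnorm_eq_mtot_of_nonneg (pmeas_nonneg f μ)

lemma massLower (μ : ℕ → (Option ℕ →₀ ℝ)) (hnorm : ∀ n, mnorm (μ n) = 1)
    (hone : Tendsto (fun n => mtot (μ n)) atTop (nhds 0)) :
    ∀ᶠ n in atTop, 1/4 ≤ mnorm (sigm (μ n)) := by
  have habs : Tendsto (fun n => |mtot (μ n)|) atTop (nhds 0) := by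
    have := hone.abs; rwa [abs_zero] at this
  filter_upwards [habs.eventually_lt_const (show (0:ℝ) < 1/2 by norm_num)] with n hn
  have h1 := mnorm_erase_none (μ n)
  have h2 := mtot_erase_none (μ n)
  have h3 := abs_mtot_le ((μ n).erase none)
  have h4 : |μ n none| ≤ |mtot (μ n)| + |mtot ((μ n).erase none)| := by
    have : μ n none = mtot (μ n) - mtot ((μ n).erase none) := by linarith
    rw [this, sub_eq_add_neg]
    exact le_trans (abs_add_le _ _) (by rw [abs_neg])
  have h5 := hnorm n
  rw [sigm]
  linarith

end QDef
section QConv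
open Filter Topology
open scoped Classical

lemma Qconv (F G : Filter ℕ) (f : ℕ → ℕ) (hf : ∀ A ∈ F, f ⁻¹' A ∈ G)
    (μ : ℕ → (Option ℕ →₀ ℝ)) (hnorm : ∀ n, mnorm (μ n) = 1)
    (OK : (Option ℕ → ℝ) → Prop)
    (H : ∀ (D : Set ℕ), Dᶜ ∈ G → ∀ w, OK w → ∀ g : Option ℕ → ℝ, g none = 0 →
      (∀ a, g a ≠ 0 → a ∈ Option.some '' D) → (∀ a, |g a| ≤ |w a|) →
      Tendsto (fun n => mIntg (μ n) g) atTop (nhds 0))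
    (hone : Tendsto (fun n => mtot (μ n)) atTop (nhds 0))
    (h : Option ℕ → ℝ) (hcont : @Continuous (Option ℕ) ℝ (NFtop F) _ h)
    (hOKw : OK (fun a => h (Option.map f a) - h none)) :
    Tendsto (fun n => mIntg (Qmeas f μ n) h) atTop (nhds (h none)) := by
  letI : TopologicalSpace (Option ℕ) := NFtop F
  set c := h none with hc
  set w : Option ℕ → ℝ := fun a => h (Option.map f a) - c with hw
  set X : ℕ → ℝ := fun n => mIntg (pmeas f (μ n)) h - c * mnorm (sigm (μ n)) with hX
  -- X n as a weighted sum
  have hXsum : ∀ n, X n = ∑ a ∈ (sigm (μ n)).support, |sigm (μ n) a| * w a := by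
    intro n
    show mIntg (pmeas f (μ n)) h - c * mnorm (sigm (μ n))
        = ∑ a ∈ (sigm (μ n)).support, |sigm (μ n) a| * w a
    have e1 : mIntg (pmeas f (μ n)) h
        = mIntg (fabs (sigm (μ n))) (fun a => h (Option.map f a)) := by
      rw [pmeas, mIntg_mapDomain]
    have e2 : c * mnorm (sigm (μ n)) = ∑ a ∈ (sigm (μ n)).support, c * |sigm (μ n) a| := by
      rw [← Finset.mul_sum, mnorm]
    have e3 : mIntg (fabs (sigm (μ n))) (fun a => h (Option.map f a))
        = ∑ a ∈ (sigm (μ n)).support, |sigm (μ n) a| * h (Option.map f a) := by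
      rw [mIntg_eq_sum (s := (sigm (μ n)).support) (by rw [fabs_support])]
      exact Finset.sum_congr rfl fun a _ => by rw [fabs_apply]
    rw [e1, e2, e3, ← Finset.sum_sub_distrib]
    exact Finset.sum_congr rfl fun a _ => by rw [hw]; ring
  -- X tends to zero
  have hXten : Tendsto X atTop (nhds 0) := by
    refine tendsto_of_abs_le ?_
    intro ε hε
    set A : Set ℕ := {x : ℕ | some x ∈ h ⁻¹' Metric.ball c (ε/2)} with hA
    have hAF : A ∈ F := by
      have hopen : IsOpen (h ⁻¹' Metric.ball c (ε/2)) :=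
        hcont.isOpen_preimage _ Metric.isOpen_ball
      exact hopen (by
        show h none ∈ Metric.ball c (ε/2)
        rw [← hc]
        exact Metric.mem_ball_self (by linarith))
    set D : Set ℕ := (f ⁻¹' A)ᶜ with hD
    have hDc : Dᶜ ∈ G := by
      rw [hD, compl_compl]
      exact hf A hAF
    have hVten := lemAB μ D w (H D hDc w hOKw)
    filter_upwards [hVten.eventually_lt_const (show (0:ℝ) < ε/2 by linarith)] with n hVn
    -- split the sum
    have hsplit : ∑ a ∈ (sigm (μ n)).support, |sigm (μ n) a| * |w a|
        = (∑ a ∈ (sigm (μ n)).support,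
            if a ∈ Option.some '' D then |sigm (μ n) a| * |w a| else 0)
          + ∑ a ∈ (sigm (μ n)).support,
            (if a ∈ Option.some '' D then 0 else |sigm (μ n) a| * |w a|) := by
      rw [← Finset.sum_add_distrib]
      refine Finset.sum_congr rfl fun a _ => ?_
      split_ifs <;> ring
    have hbd1 : (∑ a ∈ (sigm (μ n)).support,
        if a ∈ Option.some '' D then |sigm (μ n) a| * |w a| else 0)
        ≤ ∑ a ∈ (μ n).support, if a ∈ Option.some '' D then |μ n a| * |w a| else 0 := by
      have e4 : ∀ a ∈ (sigm (μ n)).support,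
          (if a ∈ Option.some '' D then |sigm (μ n) a| * |w a| else 0)
          = (if a ∈ Option.some '' D then |μ n a| * |w a| else 0) := by
        intro a _
        split_ifs with haD
        · obtain ⟨x, -, hx⟩ := haD
          subst hx
          rw [sigm_some]
        · rfl
      rw [Finset.sum_congr rfl e4]
      refine Finset.sum_le_sum_of_subset_of_nonneg (sigm_support_subset (μ n)) ?_
      intro a _ _
      split_ifs
      · positivity
      · exact le_refl _
    have hbd2 : ∑ a ∈ (sigm (μ n)).support,
        (if a ∈ Option.some '' D then 0 else |sigm (μ n) a| * |w a|)
        ≤ ∑ a ∈ (sigm (μ n)).support, |sigm (μ n) a| * (ε/2) := by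
      refine Finset.sum_le_sum fun a ha => ?_
      split_ifs with haD
      · positivity
      · have hane : a ≠ none := by
          intro he
          rw [he] at ha
          exact (Finsupp.mem_support_iff.mp ha) (sigm_none (μ n))
        obtain ⟨x, hx⟩ := Option.ne_none_iff_exists'.mp hane
        subst hx
        have hxD : x ∉ D := fun hmem => haD ⟨x, hmem, rfl⟩
        have hxA : f x ∈ A := by
          rw [hD] at hxD
          simpa using hxD
        have : |h (some (f x)) - c| < ε/2 := by
          have := hxA
          rw [hA] at this
          simpa [Real.dist_eq] using this
        have hwa : w (some x) = h (some (f x)) - c := by rw [hw]; rfl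
        rw [hwa]
        exact mul_le_mul_of_nonneg_left (le_of_lt this) (abs_nonneg _)
    have hbd3 : ∑ a ∈ (sigm (μ n)).support, |sigm (μ n) a| * (ε/2)
        ≤ ε/2 := by
      rw [← Finset.sum_mul]
      have h6 : ∑ a ∈ (sigm (μ n)).support, |sigm (μ n) a| = mnorm (sigm (μ n)) := rfl
      rw [h6]
      have h7 : mnorm (sigm (μ n)) ≤ 1 := by
        rw [← hnorm n]
        exact mnorm_sigm_le (μ n)
      nlinarith [mnorm_nonneg (sigm (μ n))]
    have habs : |X n| ≤ ∑ a ∈ (sigm (μ n)).support, |sigm (μ n) a| * |w a| := by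
      rw [hXsum n]
      refine le_trans (Finset.abs_sum_le_sum_abs _ _) ?_
      refine Finset.sum_le_sum fun a _ => ?_
      rw [abs_mul, abs_abs]
    linarith
  -- conclude
  rw [← tendsto_sub_nhds_zero_iff]
  have hml := massLower μ hnorm hone
  have h4X : Tendsto (fun n => 4 * |X n|) atTop (nhds 0) := by
    have h8 := hXten.abs.const_mul (4:ℝ)
    rwa [abs_zero, mul_zero] at h8
  refine squeeze_zero_norm' ?_ h4X
  · filter_upwards [hml] with n hn
    have hne : mnorm (sigm (μ n)) ≠ 0 := by linarith
    have e5 : mIntg (Qmeas f μ n) h - c = (mnorm (sigm (μ n)))⁻¹ * X n := by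
      rw [Qmeas, mIntg_smul, hX]
      field_simp
    rw [Real.norm_eq_abs, e5, abs_mul]
    have hinv1 : |(mnorm (sigm (μ n)))⁻¹| = (mnorm (sigm (μ n)))⁻¹ :=
      abs_of_nonneg (inv_nonneg.mpr (by linarith))
    have hinv2 : (mnorm (sigm (μ n)))⁻¹ ≤ 4 := by
      rw [show (4:ℝ) = (1/4)⁻¹ by norm_num]
      exact inv_anti₀ (by norm_num) hn
    rw [hinv1]
    exact mul_le_mul_of_nonneg_right hinv2 (abs_nonneg _)
end QConv
section Build
open Filter Topology
open scoped Classical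

lemma buildSeq (C : (Option ℕ → ℝ) → Prop) (Q : ℕ → (Option ℕ →₀ ℝ))
    (hQpos : ∀ n a, 0 ≤ Q n a)
    (hmass : ∀ᶠ n in atTop, mtot (Q n) = 1)
    (hpt : ∀ a, Tendsto (fun n => Q n a) atTop (nhds 0))
    (hconv : ∀ h, C h → Tendsto (fun n => mIntg (Q n) h) atTop (nhds (h none))) :
    ∃ τ : ℕ → (Option ℕ →₀ ℝ), (∀ k, mnorm (τ k) = 1) ∧
      ∀ h, C h → Tendsto (fun k => mIntg (τ k) h) atTop (nhds 0) := by
  obtain ⟨N₀, hN₀⟩ := hmass.exists_forall_of_atTop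
  have step : ∀ j, ∃ m, j < m ∧ (∑ a ∈ (Q j).support, Q m a) < 1/4 := by
    intro j
    have hS : Tendsto (fun n => ∑ a ∈ (Q j).support, Q n a) atTop (nhds 0) := by
      have h1 : Tendsto (fun n => ∑ a ∈ (Q j).support, Q n a) atTop
          (nhds (∑ _a ∈ (Q j).support, (0:ℝ))) :=
        tendsto_finset_sum _ (fun a _ => hpt a)
      simpa using h1
    obtain ⟨N', hN'⟩ := (hS.eventually_lt_const (show (0:ℝ) < 1/4 by norm_num)).exists_forall_of_atTop
    exact ⟨max (j+1) N', lt_of_lt_of_le (Nat.lt_succ_self j) (le_max_left _ _),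
      hN' _ (le_max_right _ _)⟩
  let mseq : ℕ → ℕ := fun k => Nat.rec N₀ (fun _ p => (step p).choose) k
  have hmS : ∀ k, mseq (k+1) = (step (mseq k)).choose := fun _ => rfl
  have hmlt : ∀ k, mseq k < mseq (k+1) := fun k => (step (mseq k)).choose_spec.1
  have hmge : ∀ k, N₀ ≤ mseq k := by
    intro k
    induction k with
    | zero => exact le_refl _
    | succ k ih => exact le_trans ih (le_of_lt (hmlt k))
  have hover : ∀ k, (∑ a ∈ (Q (mseq k)).support, Q (mseq (k+1)) a) < 1/4 :=
    fun k => (step (mseq k)).choose_spec.2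
  set d : ℕ → (Option ℕ →₀ ℝ) := fun k => Q (mseq k) - Q (mseq (k+1)) with hd
  have hdnorm : ∀ k, 1/2 ≤ mnorm (d k) := by
    intro k
    set u := mseq k
    set v := mseq (k+1)
    set s := (Q u).support ∪ (Q v).support with hs
    have h1 : mnorm (d k) = ∑ a ∈ s, |Q u a - Q v a| := by
      rw [mnorm_eq_sum (s := s) ?hsub]
      · refine Finset.sum_congr rfl fun a _ => ?_
        rw [hd]
        rfl
      case hsub =>
        rw [hd]
        exact Finsupp.support_sub
    have h2 : ∀ a ∈ s, Q v a - 2 * (if a ∈ (Q u).support then Q v a else 0)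
        ≤ |Q u a - Q v a| := by
      intro a _
      split_ifs with ha
      · have := abs_nonneg (Q u a - Q v a)
        have := hQpos v a
        linarith
      · rw [Finsupp.notMem_support_iff.mp ha, zero_sub, abs_neg,
          abs_of_nonneg (hQpos v a)]
        linarith
    have h3 : ∑ a ∈ s, Q v a = 1 := by
      rw [← mtot_eq_sum (s := s) Finset.subset_union_right]
      exact hN₀ v (hmge (k+1))
    have h4 : ∑ a ∈ s, (if a ∈ (Q u).support then Q v a else 0) < 1/4 := by
      rw [Finset.sum_ite_mem]
      refine lt_of_le_of_lt ?_ (hover k)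
      exact Finset.sum_le_sum_of_subset_of_nonneg Finset.inter_subset_right
        (fun a _ _ => hQpos v a)
    have h5 := Finset.sum_le_sum h2
    rw [Finset.sum_sub_distrib, ← Finset.mul_sum, h3] at h5
    rw [h1]
    linarith
  set τ : ℕ → (Option ℕ →₀ ℝ) := fun k => (mnorm (d k))⁻¹ • d k with hτ
  refine ⟨τ, ?_, ?_⟩
  · intro k
    have hne : mnorm (d k) ≠ 0 := by have := hdnorm k; linarith
    rw [hτ]
    show mnorm ((mnorm (d k))⁻¹ • d k) = 1
    rw [mnorm_smul, abs_of_nonneg (inv_nonneg.mpr (mnorm_nonneg _)), inv_mul_cancel₀ hne]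
  · intro h hC
    have hmono : StrictMono mseq := strictMono_nat_of_lt_succ hmlt
    have hQm : Tendsto (fun k => mIntg (Q (mseq k)) h) atTop (nhds (h none)) :=
      (hconv h hC).comp hmono.tendsto_atTop
    have hQm1 : Tendsto (fun k => mIntg (Q (mseq (k+1))) h) atTop (nhds (h none)) := by
      rw [show (fun k => mIntg (Q (mseq (k+1))) h)
          = (fun j => mIntg (Q (mseq j)) h) ∘ (fun k => k+1) from rfl]
      exact hQm.comp (tendsto_add_atTop_nat 1)
    have hdiff : Tendsto (fun k => mIntg (Q (mseq k)) h - mIntg (Q (mseq (k+1))) h)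
        atTop (nhds 0) := by
      have h6 := hQm.sub hQm1
      rwa [sub_self] at h6
    have h2diff : Tendsto (fun k => 2 * |mIntg (Q (mseq k)) h - mIntg (Q (mseq (k+1))) h|)
        atTop (nhds 0) := by
      have h7 := hdiff.abs.const_mul (2:ℝ)
      rwa [abs_zero, mul_zero] at h7
    refine squeeze_zero_norm' ?_ h2diff
    refine Filter.Eventually.of_forall fun k => ?_
    have he : mIntg (τ k) h = (mnorm (d k))⁻¹
        * (mIntg (Q (mseq k)) h - mIntg (Q (mseq (k+1))) h) := by
      rw [hτ]
      show mIntg ((mnorm (d k))⁻¹ • d k) h = _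
      rw [mIntg_smul, hd]
      show (mnorm (d k))⁻¹ * mIntg (Q (mseq k) - Q (mseq (k+1))) h = _
      rw [mIntg_sub]
    rw [Real.norm_eq_abs, he, abs_mul,
      abs_of_nonneg (inv_nonneg.mpr (mnorm_nonneg _))]
    have hinv : (mnorm (d k))⁻¹ ≤ 2 := by
      rw [show (2:ℝ) = (1/2)⁻¹ by norm_num]
      exact inv_anti₀ (by norm_num) (hdnorm k)
    exact mul_le_mul_of_nonneg_right hinv (abs_nonneg _)

end Build

end Final2

/-- If `F ≤_K G` (Katětov), then the (B)JNP passes from `N_G` down to `N_F`. -/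
theorem stmt10 (F G : Filter ℕ) (hF : IsFreeFilter F) (hG : IsFreeFilter G)
    (h : KatetovLE F G) :
    (JNP (NFtop G) → JNP (NFtop F)) ∧ (BJNP (NFtop G) → BJNP (NFtop F)) := by
  obtain ⟨f, hfK⟩ := h
  have hsingle : ∀ x : ℕ, ({x} : Set ℕ)ᶜ ∈ F := by
    intro x
    refine hF.2 ?_
    rw [Filter.mem_cofinite, compl_compl]
    exact Set.finite_singleton x
  -- the indicator of a single point of ω is continuous on N_F and bounded by 1
  have hχ : ∀ x : ℕ, @Continuous (Option ℕ) ℝ (NFtop F) _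
      (fun b => if b = some x then (1:ℝ) else 0) := by
    intro x
    refine nftop_continuous_of_ideal_support (hsingle x) (if_neg (by simp)) ?_
    intro a ha
    by_cases hax : a = some x
    · exact ⟨x, rfl, hax.symm⟩
    · exact absurd (if_neg hax) ha
  have hχbd : ∀ x : ℕ, ∀ b : Option ℕ, |if b = some x then (1:ℝ) else 0| ≤ 1 := by
    intro x b
    split_ifs <;> simp
  constructor
  -- JNP case
  · rintro ⟨μ0, hμnorm, hμconv⟩
    have hone : Tendsto (fun n => mtot (μ0 n)) atTop (nhds 0) := by
      have hc1 : @Continuous (Option ℕ) ℝ (NFtop G) _ (fun _ => (1:ℝ)) :=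
        @continuous_const _ _ (NFtop G) _ _
      exact (hμconv _ hc1).congr fun n => mIntg_one (μ0 n)
    have H : ∀ (D : Set ℕ), Dᶜ ∈ G → ∀ w : Option ℕ → ℝ, True → ∀ g : Option ℕ → ℝ,
        g none = 0 → (∀ a, g a ≠ 0 → a ∈ Option.some '' D) → (∀ a, |g a| ≤ |w a|) →
        Tendsto (fun n => mIntg (μ0 n) g) atTop (nhds 0) := by
      intro D hD w _ g hg0 hgsupp hgbd
      exact hμconv g (nftop_continuous_of_ideal_support hD hg0 hgsupp)
    have hQconv : ∀ hh : Option ℕ → ℝ, @Continuous (Option ℕ) ℝ (NFtop F) _ hh →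
        Tendsto (fun n => mIntg (Qmeas f μ0 n) hh) atTop (nhds (hh none)) :=
      fun hh hcont => Qconv F G f hfK μ0 hμnorm _ H hone hh hcont trivial
    have hQpos : ∀ n a, 0 ≤ Qmeas f μ0 n a := by
      intro n a
      show 0 ≤ ((mnorm (sigm (μ0 n)))⁻¹ • pmeas f (μ0 n)) a
      rw [Finsupp.smul_apply, smul_eq_mul]
      exact mul_nonneg (inv_nonneg.mpr (mnorm_nonneg _)) (pmeas_nonneg f (μ0 n) a)
    have hmass : ∀ᶠ n in atTop, mtot (Qmeas f μ0 n) = 1 := by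
      filter_upwards [massLower μ0 hμnorm hone] with n hn
      have hne : mnorm (sigm (μ0 n)) ≠ 0 := by linarith
      show mtot ((mnorm (sigm (μ0 n)))⁻¹ • pmeas f (μ0 n)) = 1
      rw [mtot_smul, mtot_pmeas, inv_mul_cancel₀ hne]
    have hpt : ∀ a, Tendsto (fun n => Qmeas f μ0 n a) atTop (nhds 0) := by
      intro a
      cases a with
      | none =>
        have hz : ∀ n, Qmeas f μ0 n none = 0 := by
          intro n
          show ((mnorm (sigm (μ0 n)))⁻¹ • pmeas f (μ0 n)) none = 0
          rw [Finsupp.smul_apply, pmeas_none, smul_zero]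
        simpa [hz] using (tendsto_const_nhds : Tendsto (fun _ : ℕ => (0:ℝ)) atTop _)
      | some x =>
        have h9 := hQconv _ (hχ x)
        rw [if_neg (by simp)] at h9
        refine h9.congr fun n => ?_
        rw [mIntg_single_pt, mul_one]
    obtain ⟨τ, ht1, ht2⟩ := buildSeq (fun hh => @Continuous (Option ℕ) ℝ (NFtop F) _ hh)
      (Qmeas f μ0) hQpos hmass hpt hQconv
    exact ⟨τ, ht1, ht2⟩
  -- BJNP case
  · rintro ⟨μ0, hμnorm, hμconv⟩
    have hone : Tendsto (fun n => mtot (μ0 n)) atTop (nhds 0) := by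
      have hc1 : @Continuous (Option ℕ) ℝ (NFtop G) _ (fun _ => (1:ℝ)) :=
        @continuous_const _ _ (NFtop G) _ _
      exact (hμconv _ hc1 ⟨1, fun _ => by norm_num⟩).congr fun n => mIntg_one (μ0 n)
    set OK : (Option ℕ → ℝ) → Prop := fun w => ∃ Cb : ℝ, ∀ a, |w a| ≤ Cb with hOK
    have H : ∀ (D : Set ℕ), Dᶜ ∈ G → ∀ w : Option ℕ → ℝ, OK w → ∀ g : Option ℕ → ℝ,
        g none = 0 → (∀ a, g a ≠ 0 → a ∈ Option.some '' D) → (∀ a, |g a| ≤ |w a|) →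
        Tendsto (fun n => mIntg (μ0 n) g) atTop (nhds 0) := by
      intro D hD w hOKw g hg0 hgsupp hgbd
      obtain ⟨Cb, hCb⟩ := hOKw
      refine hμconv g (nftop_continuous_of_ideal_support hD hg0 hgsupp)
        ⟨Cb, fun a => le_trans (hgbd a) (le_trans (le_abs_self _) (by rw [abs_abs]; exact hCb a))⟩
    have hQconv : ∀ hh : Option ℕ → ℝ,
        (@Continuous (Option ℕ) ℝ (NFtop F) _ hh ∧ ∃ Ch : ℝ, ∀ a, |hh a| ≤ Ch) →
        Tendsto (fun n => mIntg (Qmeas f μ0 n) hh) atTop (nhds (hh none)) := by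
      rintro hh ⟨hcont, Ch, hCh⟩
      refine Qconv F G f hfK μ0 hμnorm OK H hone hh hcont ?_
      refine ⟨Ch + |hh none|, fun a => ?_⟩
      calc |hh (Option.map f a) - hh none| ≤ |hh (Option.map f a)| + |hh none| := by
            rw [sub_eq_add_neg]
            exact le_trans (abs_add_le _ _) (by rw [abs_neg])
      _ ≤ Ch + |hh none| := by linarith [hCh (Option.map f a)]
    have hQpos : ∀ n a, 0 ≤ Qmeas f μ0 n a := by
      intro n a
      show 0 ≤ ((mnorm (sigm (μ0 n)))⁻¹ • pmeas f (μ0 n)) a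
      rw [Finsupp.smul_apply, smul_eq_mul]
      exact mul_nonneg (inv_nonneg.mpr (mnorm_nonneg _)) (pmeas_nonneg f (μ0 n) a)
    have hmass : ∀ᶠ n in atTop, mtot (Qmeas f μ0 n) = 1 := by
      filter_upwards [massLower μ0 hμnorm hone] with n hn
      have hne : mnorm (sigm (μ0 n)) ≠ 0 := by linarith
      show mtot ((mnorm (sigm (μ0 n)))⁻¹ • pmeas f (μ0 n)) = 1
      rw [mtot_smul, mtot_pmeas, inv_mul_cancel₀ hne]
    have hpt : ∀ a, Tendsto (fun n => Qmeas f μ0 n a) atTop (nhds 0) := by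
      intro a
      cases a with
      | none =>
        have hz : ∀ n, Qmeas f μ0 n none = 0 := by
          intro n
          show ((mnorm (sigm (μ0 n)))⁻¹ • pmeas f (μ0 n)) none = 0
          rw [Finsupp.smul_apply, pmeas_none, smul_zero]
        simpa [hz] using (tendsto_const_nhds : Tendsto (fun _ : ℕ => (0:ℝ)) atTop _)
      | some x =>
        have h9 := hQconv _ ⟨hχ x, 1, hχbd x⟩
        rw [if_neg (by simp)] at h9
        refine h9.congr fun n => ?_
        rw [mIntg_single_pt, mul_one]
    obtain ⟨τ, ht1, ht2⟩ := buildSeq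
      (fun hh => @Continuous (Option ℕ) ℝ (NFtop F) _ hh ∧ ∃ Ch : ℝ, ∀ a, |hh a| ≤ Ch)
      (Qmeas f μ0) hQpos hmass hpt hQconv
    exact ⟨τ, ht1, fun g hg hb => ht2 g ⟨hg, hb⟩⟩
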